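/- Let P be a symmetric involution on ℝ^{2m}, Π an orthogonal projection commuting with P, and Z⁰ a random vector with E[Z⁰(Z⁰)ᵀ] = σ²I. Then for all k, the diagonal of E[(ΠZ_k)(ΠZ_k)ᵀ], where Z_k has E[ΠZ_k | 𝒜₀] = M_k Π Z⁰ with M_k = ½((I+P)+(1-2θμ)^k(I-P)) and Z⁰ measurable w.r.t. 𝒜₀, is entrywise bounded below by the diagonal of Π (σ²/2)((I+P) + (1-2θμ)^{2k}(I-P)). -/

import Mathlib

open MeasureTheory Matrix

/-- With `P` a symmetric involution, `Q` an orthogonal projection commuting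
with `P`, `Z⁰` an `𝒜₀`-measurable random vector with `E[Z⁰(Z⁰)ᵀ] = σ²I`, and `Z_k`
satisfying `E[Q Z_k | 𝒜₀] = M_k Q Z⁰` with `M_k = ½((I+P)+(1-2θμ)^k(I-P))`, the diagonal
of `E[(QZ_k)(QZ_k)ᵀ]` is bounded below entrywise by the diagonal of
`Q (σ²/2)((I+P)+(1-2θμ)^{2k}(I-P))`. -/
theorem stmt15 (m : ℕ) {Ω : Type*} {𝒜 : MeasurableSpace Ω} (ℙ : Measure Ω)
    [IsProbabilityMeasure ℙ] (𝒜₀ : MeasurableSpace Ω) (h𝒜₀ : 𝒜₀ ≤ 𝒜)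
    (P Q : Matrix (Fin (2 * m)) (Fin (2 * m)) ℝ)
    (hPsymm : P.IsSymm) (hPinv : P * P = 1)
    (hQsymm : Q.IsSymm) (hQidem : Q * Q = Q) (hQP : Q * P = P * Q)
    (θ μ : ℝ) (hθμ0 : 0 < θ * μ) (hθμ1 : θ * μ < 1)
    (Z0 : Ω → Fin (2 * m) → ℝ) (hZ0meas : Measurable[𝒜₀] Z0)
    (hZ0int : ∀ i j, Integrable (fun ω => Z0 ω i * Z0 ω j) ℙ)
    (σ : ℝ)
    (hmom : ∀ i j, ∫ ω, Z0 ω i * Z0 ω j ∂ℙ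
      = (σ ^ 2 • (1 : Matrix (Fin (2 * m)) (Fin (2 * m)) ℝ)) i j)
    (k : ℕ) (Zk : Ω → Fin (2 * m) → ℝ)
    (hZk : ∀ i, MemLp (fun ω => Q.mulVec (Zk ω) i) 2 ℙ)
    (hcond : ∀ i, (ℙ[fun ω => Q.mulVec (Zk ω) i|𝒜₀])
      =ᵐ[ℙ] fun ω =>
        (((1 / 2 : ℝ) • ((1 + P) + (1 - 2 * (θ * μ)) ^ k • (1 - P))).mulVec
          (Q.mulVec (Z0 ω))) i) :
    ∀ i, (Q * ((σ ^ 2 / 2) • ((1 + P) + (1 - 2 * (θ * μ)) ^ (2 * k) • (1 - P)))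
        : Matrix (Fin (2 * m)) (Fin (2 * m)) ℝ) i i
      ≤ ∫ ω, (Q.mulVec (Zk ω) i) ^ 2 ∂ℙ := by
  intro i
  set γ : ℝ := 1 - 2 * (θ * μ) with hγ
  set M : Matrix (Fin (2 * m)) (Fin (2 * m)) ℝ :=
    (1 / 2 : ℝ) • ((1 + P) + γ ^ k • (1 - P)) with hM
  set B : Matrix (Fin (2 * m)) (Fin (2 * m)) ℝ := M * Q with hB
  -- matrix algebra
  have hMsymm : Mᵀ = M := by
    simp [hM, Matrix.transpose_add, Matrix.transpose_smul, Matrix.transpose_sub, hPsymm.eq]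
  have hPQ : P * Q = Q * P := hQP.symm
  have hQM : Q * M = M * Q := by
    simp only [hM, Matrix.mul_smul, Matrix.smul_mul, Matrix.mul_add, Matrix.add_mul,
      Matrix.mul_sub, Matrix.sub_mul, Matrix.mul_one, Matrix.one_mul, hQP]
  have hMM : M * M = (1 / 2 : ℝ) • ((1 + P) + γ ^ (2 * k) • (1 - P)) := by
    have h2k : γ ^ (2 * k) = γ ^ k * γ ^ k := by rw [two_mul, pow_add]
    rw [h2k]
    simp only [hM, Matrix.smul_mul, Matrix.mul_smul, Matrix.mul_add, Matrix.add_mul,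
      Matrix.mul_sub, Matrix.sub_mul, Matrix.mul_one, Matrix.one_mul, hPinv, smul_smul]
    module
  have h_alg : σ ^ 2 • (B * Bᵀ)
      = Q * ((σ ^ 2 / 2) • ((1 + P) + γ ^ (2 * k) • (1 - P))) := by
    have hBt : Bᵀ = Q * M := by rw [hB, Matrix.transpose_mul, hMsymm, hQsymm.eq]
    rw [hB, hBt]
    calc σ ^ 2 • (M * Q * (Q * M))
        = σ ^ 2 • (M * (Q * Q) * M) := by rw [Matrix.mul_assoc, Matrix.mul_assoc,
          Matrix.mul_assoc]
      _ = σ ^ 2 • (M * Q * M) := by rw [hQidem]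
      _ = σ ^ 2 • (Q * (M * M)) := by rw [← hQM, Matrix.mul_assoc]
      _ = Q * ((σ ^ 2 / 2) • ((1 + P) + γ ^ (2 * k) • (1 - P))) := by
          rw [hMM, Matrix.mul_smul, Matrix.mul_smul, smul_smul]
          ring_nf
  -- the conditional expectation function
  set f : Ω → ℝ := fun ω => B.mulVec (Z0 ω) i with hf
  set X : Ω → ℝ := fun ω => Q.mulVec (Zk ω) i with hX
  have hcond' : (ℙ[X|𝒜₀]) =ᵐ[ℙ] f := by
    refine (hcond i).trans (Filter.EventuallyEq.of_eq (funext fun ω => ?_))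
    show (M *ᵥ Q *ᵥ Z0 ω) i = ((M * Q) *ᵥ Z0 ω) i
    rw [Matrix.mulVec_mulVec]
  have hf_sum : ∀ ω, f ω = ∑ j, B i j * Z0 ω j := fun ω => rfl
  have hfsq_sum : ∀ ω, f ω ^ 2 = ∑ j, ∑ l, B i j * B i l * (Z0 ω j * Z0 ω l) := by
    intro ω
    rw [hf_sum, sq, Finset.sum_mul_sum]
    exact Finset.sum_congr rfl fun j _ => Finset.sum_congr rfl fun l _ => by ring
  have hterm_int : ∀ j l : Fin (2 * m),
      Integrable (fun ω => B i j * B i l * (Z0 ω j * Z0 ω l)) ℙ :=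
    fun j l => (hZ0int j l).const_mul _
  have hf2int : Integrable (fun ω => f ω ^ 2) ℙ := by
    have : (fun ω => f ω ^ 2)
        = fun ω => ∑ j, ∑ l, B i j * B i l * (Z0 ω j * Z0 ω l) := funext hfsq_sum
    rw [this]
    exact integrable_finset_sum _ fun j _ => integrable_finset_sum _ fun l _ => hterm_int j l
  have hf2 : ∫ ω, f ω ^ 2 ∂ℙ = σ ^ 2 * (B * Bᵀ) i i := by
    calc ∫ ω, f ω ^ 2 ∂ℙ
        = ∫ ω, ∑ j, ∑ l, B i j * B i l * (Z0 ω j * Z0 ω l) ∂ℙ := by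
          exact integral_congr_ae (Filter.EventuallyEq.of_eq (funext hfsq_sum))
      _ = ∑ j, ∑ l, B i j * B i l * ∫ ω, Z0 ω j * Z0 ω l ∂ℙ := by
          rw [integral_finset_sum _ fun j _ =>
            integrable_finset_sum _ fun l _ => hterm_int j l]
          exact Finset.sum_congr rfl fun j _ => by
            rw [integral_finset_sum _ fun l _ => hterm_int j l]
            exact Finset.sum_congr rfl fun l _ => integral_const_mul _ _
      _ = ∑ j, ∑ l, B i j * B i l * ((σ ^ 2 • (1 : Matrix (Fin (2 * m)) (Fin (2 * m)) ℝ)) j l)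
          := Finset.sum_congr rfl fun j _ => Finset.sum_congr rfl fun l _ => by rw [hmom]
      _ = σ ^ 2 * (B * Bᵀ) i i := by
          simp only [Matrix.smul_apply, Matrix.one_apply, smul_eq_mul, mul_ite, mul_one, mul_zero]
          simp only [Finset.sum_ite_eq, Finset.mem_univ, if_true]
          rw [Matrix.mul_apply, Finset.mul_sum]
          exact Finset.sum_congr rfl fun j _ => by
            rw [Matrix.transpose_apply]; ring
  -- measurability / integrability
  have hfmeas : StronglyMeasurable[𝒜₀] f := by
    have he : f = fun ω => ∑ j, B i j * Z0 ω j := funext hf_sum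
    rw [he]
    exact (Finset.measurable_sum _ fun j _ =>
      (((measurable_pi_apply j).comp hZ0meas).const_mul _)).stronglyMeasurable
  have hfmem : MemLp f 2 ℙ := by
    rw [memLp_two_iff_integrable_sq ((hfmeas.mono h𝒜₀).aestronglyMeasurable)]
    exact hf2int
  have hXmem : MemLp X 2 ℙ := hZk i
  have hX2int : Integrable (fun ω => X ω ^ 2) ℙ := hXmem.integrable_sq
  have hXint : Integrable X ℙ := hXmem.integrable one_le_two
  have hfXint : Integrable (f * X) ℙ := by
    rw [← memLp_one_iff_integrable]
    exact hXmem.smul (φ := f) hfmem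
  have hfXint' : Integrable (fun ω => f ω * X ω) ℙ := hfXint
  -- pull-out and tower
  have hpull : (ℙ[f * X|𝒜₀]) =ᵐ[ℙ] f * (ℙ[X|𝒜₀]) :=
    condExp_mul_of_stronglyMeasurable_left hfmeas hfXint hXint
  have htower : ∫ ω, f ω * X ω ∂ℙ = ∫ ω, f ω ^ 2 ∂ℙ := by
    have h1 : ∫ ω, f ω * X ω ∂ℙ = ∫ ω, (ℙ[f * X|𝒜₀]) ω ∂ℙ :=
      (integral_condExp h𝒜₀ (f := f * X)).symm
    rw [h1]
    refine integral_congr_ae ?_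
    filter_upwards [hpull, hcond'] with ω h₁ h₂
    rw [h₁, Pi.mul_apply, h₂, sq]
  -- Jensen
  have hsub : Integrable (fun ω => X ω ^ 2 - 2 * (f ω * X ω)) ℙ :=
    hX2int.sub (hfXint'.const_mul 2)
  have hexp : ∫ ω, (X ω - f ω) ^ 2 ∂ℙ
      = ∫ ω, X ω ^ 2 ∂ℙ - 2 * ∫ ω, f ω * X ω ∂ℙ + ∫ ω, f ω ^ 2 ∂ℙ := by
    have : (fun ω => (X ω - f ω) ^ 2)
        = fun ω => (X ω ^ 2 - 2 * (f ω * X ω)) + f ω ^ 2 := funext fun ω => by ring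
    rw [this, integral_add hsub hf2int, integral_sub hX2int (hfXint'.const_mul 2),
      integral_const_mul]
  have hnn : 0 ≤ ∫ ω, (X ω - f ω) ^ 2 ∂ℙ := integral_nonneg fun ω => sq_nonneg _
  have hjensen : ∫ ω, f ω ^ 2 ∂ℙ ≤ ∫ ω, X ω ^ 2 ∂ℙ := by
    rw [hexp, htower] at hnn; linarith
  -- conclude
  have hentry : ((Q * ((σ ^ 2 / 2) • ((1 + P) + γ ^ (2 * k) • (1 - P)))
        : Matrix (Fin (2 * m)) (Fin (2 * m)) ℝ)) i i
      = σ ^ 2 * (B * Bᵀ) i i := by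
    rw [← h_alg, Matrix.smul_apply, smul_eq_mul]
  calc ((Q * ((σ ^ 2 / 2) • ((1 + P) + γ ^ (2 * k) • (1 - P)))
        : Matrix (Fin (2 * m)) (Fin (2 * m)) ℝ)) i i
      = σ ^ 2 * (B * Bᵀ) i i := hentry
    _ = ∫ ω, f ω ^ 2 ∂ℙ := hf2.symm
    _ ≤ ∫ ω, X ω ^ 2 ∂ℙ := hjensen
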